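/- arXiv:1011.0584 — 3 statements merged into one kernel-verified Lean document; each statement's English description precedes it below -/
import Mathlib

section
/- Let D be a p-division algebra with centre Z, and let T ⊆ D be a torus of rank d with 1 ∈ T. Then the set Λ of weights of T in D (the Z-linear forms λ : T → Z whose weight space D_λ is nonzero) is an additive subgroup of Hom_Z(T, Z), every weight takes values in the prime field 𝔽_p, and Λ is isomorphic as a group to (ℤ/pℤ)^d; in particular |Λ| = p^d. -/
/-!
For toral `t` one has `(ad t) ^ p = ad (t ^ p) = ad t`, so the eigenvalues of `ad t` lie in `𝔽_p`,
and since the `ad t` commute, `D` is the sum of the simultaneous eigenspaces of `ad` along a basis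
`1, t₁, …, t_d` of `T` made of toral elements. A weight vanishes on `1`, so it is determined by its
values on the `tᵢ`; this embeds the weights, a group because `D_λ D_μ ⊆ D_{λ+μ}` and
`D_λ⁻¹ ⊆ D_{-λ}`, into `𝔽_p^d`. The embedding is onto: otherwise a nonzero linear form on `𝔽_p^d`
vanishing on the weights yields an `𝔽_p`-combination `t` of the `tᵢ` on which every weight
vanishes, so `ad t = 0` on all of `D`; then `t` is central, hence in `Z · 1`, contradicting the
linear independence of `1, t₁, …, t_d`.
-/

open Polynomial Module

section PrimeField

variable {p : ℕ} [Fact p.Prime]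

theorem ZMod.sum_pow_pred_eq_neg_one : ∑ b : ZMod p, b ^ (p - 1) = -1 := by
  have hp := (Fact.out : p.Prime).two_le
  classical
  rw [← Finset.sum_erase _ (zero_pow (by omega : p - 1 ≠ 0)),
    Finset.sum_congr rfl fun b hb => ZMod.pow_card_sub_one_eq_one (Finset.ne_of_mem_erase hb),
    Finset.sum_const, Finset.card_erase_of_mem (Finset.mem_univ _), Finset.card_univ, ZMod.card,
    nsmul_one, Nat.cast_pred (by omega), ZMod.natCast_self, zero_sub]

variable (R : Type*) [CommRing R] [IsDomain R] [CharP R p]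

-- Both sides have degree `< p` and agree at the `p` points of the prime field.
theorem Polynomial.sum_X_sub_C_pow_pred :
    ∑ c : ZMod p, (X - C (ZMod.castHom dvd_rfl R c)) ^ (p - 1) = -1 := by
  have hp := (Fact.out : p.Prime).two_le
  rw [← sub_eq_zero, sub_neg_eq_add]
  refine eq_zero_of_natDegree_lt_card_of_eval_eq_zero _ (ZMod.castHom_injective R)
    (fun a => ?_) ?_
  · have hsum : ∑ c : ZMod p, (a - c) ^ (p - 1) = -1 := by
      rw [← ZMod.sum_pow_pred_eq_neg_one]
      exact Fintype.sum_equiv (Equiv.subLeft a) _ _ fun c => rfl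
    simp only [eval_add, eval_finsetSum, eval_pow, eval_sub, eval_X, eval_C, eval_one,
      ← map_sub, ← map_pow, ← map_sum, hsum, map_neg, map_one, neg_add_cancel]
  · rw [ZMod.card]
    refine (natDegree_add_le _ _).trans_lt (max_lt ?_ (by rw [natDegree_one]; omega))
    refine (natDegree_sum_le_of_forall_le _ _ fun c _ => ?_).trans_lt (by omega : p - 1 < p)
    rw [natDegree_pow, natDegree_X_sub_C, mul_one]

theorem exists_castHom_eq_of_pow_eq_self {K : Type*} [Field K] [CharP K p] {z : K}
    (hz : z ^ p = z) : ∃ c : ZMod p, ZMod.castHom dvd_rfl K c = z := by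
  rwa [← Subfield.mem_bot_iff_pow_eq_self K p, ← ZMod.fieldRange_castHom_eq_bot p] at hz

end PrimeField

section Frobenius

variable {p : ℕ} [Fact p.Prime] {K A : Type*} [Field K] [CharP K p] [Ring A] [Algebra K A]

theorem sub_smul_one_pow_char (a : A) (c : K) : (a - c • 1) ^ p = a ^ p - c ^ p • 1 := by
  have h := congrArg (aeval a) (sub_pow_char (p := p) (X : K[X]) (C c))
  rw [← C_pow, map_pow, map_sub, map_sub, map_pow, aeval_X, aeval_C, aeval_C] at h
  simpa only [Algebra.algebraMap_eq_smul_one] using h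

end Frobenius

namespace Module.End

variable {p : ℕ} [Fact p.Prime] {K V : Type*} [Field K] [CharP K p] [AddCommGroup V] [Module K V]

theorem pow_eq_self_of_hasEigenvector {f : End K V} {n : ℕ} (hf : f ^ n = f) {μ : K} {x : V}
    (hx : f.HasEigenvector μ x) : μ ^ n = μ :=
  smul_left_injective K hx.2 <| by
    simp only [← hx.pow_apply, hf, hx.apply_eq_smul]

-- When `f ^ p = f`, `x - (f - c) ^ (p - 1) x` is the component of `x` in the `c`-eigenspace.
theorem sum_sub_pow_pred_apply (f : End K V) (x : V) :
    ∑ c : ZMod p, (x - ((f - ZMod.castHom dvd_rfl K c • 1) ^ (p - 1)) x) = x := by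
  have h := congrArg (fun P : K[X] => aeval f P x) (sum_X_sub_C_pow_pred (p := p) K)
  simp only [map_sum, map_pow, map_sub, aeval_X, aeval_C, map_neg, map_one,
    LinearMap.sum_apply, Algebra.algebraMap_eq_smul_one] at h
  rw [Finset.sum_sub_distrib, h, Finset.sum_const, Finset.card_univ, ZMod.card,
    ← Nat.cast_smul_eq_nsmul K, CharP.cast_eq_zero, zero_smul]
  simp

theorem sub_pow_pred_apply_mem_eigenspace {f : End K V} (hf : f ^ p = f) (c : ZMod p) (x : V) :
    x - ((f - ZMod.castHom dvd_rfl K c • 1) ^ (p - 1)) x ∈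
      f.eigenspace (ZMod.castHom dvd_rfl K c) := by
  have hp := (Fact.out : p.Prime).one_le
  set g := f - ZMod.castHom dvd_rfl K c • (1 : End K V)
  have hg : g ^ p = g := by
    rw [sub_smul_one_pow_char, hf, ← map_pow, ZMod.pow_card]
  rw [eigenspace_def, LinearMap.mem_ker, map_sub, ← Module.End.mul_apply, ← pow_succ',
    Nat.sub_add_cancel hp, hg, sub_self]

theorem iSup_iInf_eigenspace_eq_top_of_pow_char_eq_self {ι : Type*} [Fintype ι]
    (f : ι → End K V) (hcomm : ∀ i j, Commute (f i) (f j)) (hf : ∀ i, f i ^ p = f i) :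
    ⨆ v : ι → ZMod p, ⨅ i, (f i).eigenspace (ZMod.castHom dvd_rfl K (v i)) = ⊤ := by
  classical
  suffices ∀ s : Finset ι,
      ⨆ v : ι → ZMod p, ⨅ i ∈ s, (f i).eigenspace (ZMod.castHom dvd_rfl K (v i)) = ⊤ by
    simpa using this Finset.univ
  intro s
  induction s using Finset.induction_on with
  | empty => simp
  | insert k s hk ih =>
    refine eq_top_iff.2 (ih ▸ iSup_le fun v x hx => ?_)
    rw [← sum_sub_pow_pred_apply (f k) x]
    refine Submodule.sum_mem _ fun c _ => Submodule.mem_iSup_of_mem (Function.update v k c) ?_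
    simp only [Submodule.mem_iInf, Finset.mem_insert]
    rintro i (rfl | hi)
    · simpa using sub_pow_pred_apply_mem_eigenspace (hf i) c x
    · rw [Function.update_of_ne (ne_of_mem_of_not_mem hi hk)]
      have hxi := (Submodule.mem_iInf _).1 ((Submodule.mem_iInf _).1 hx i) hi
      have hcomm_proj : Commute (f i) ((f k - ZMod.castHom dvd_rfl K c • 1) ^ (p - 1)) :=
        ((hcomm i k).sub_right ((Commute.one_right _).smul_right _)).pow_right _
      exact Submodule.sub_mem _ hxi (mapsTo_genEigenspace_of_comm hcomm_proj _ _ hxi)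

end Module.End

section InnerDerivation

variable (R A : Type*) [CommRing R] [Ring A] [Algebra R A]

def ad : A →ₗ[R] Module.End R A :=
  LinearMap.mul R A - (LinearMap.mul R A).flip

variable {R A}

@[simp]
theorem ad_apply (a x : A) : ad R A a x = a * x - x * a := rfl

theorem ad_algebraMap (r : R) : ad R A (algebraMap R A r) = 0 := by
  ext x
  simp [Algebra.commutes]

theorem commute_ad {a b : A} (h : Commute a b) : Commute (ad R A a) (ad R A b) := by
  ext x
  have hl : a * (b * x) = b * (a * x) := by rw [← mul_assoc, h.eq, mul_assoc]
  have hr : x * (a * b) = x * (b * a) := by rw [h.eq]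
  simp only [Module.End.mul_apply, ad_apply, mul_sub, sub_mul, mul_assoc, hl, hr]
  abel

theorem ad_pow_char (p : ℕ) [Fact p.Prime] [CharP A p] (a : A) :
    ad R A a ^ p = ad R A (a ^ p) := by
  have : CharP (Module.End R A) p :=
    charP_of_injective_ringHom (f := (Algebra.lmul R A).toRingHom) Algebra.lmul_injective p
  have had : ∀ b : A, ad R A b = LinearMap.mulLeft R b - LinearMap.mulRight R b := fun _ => rfl
  rw [had, had, sub_pow_char_of_commute p (LinearMap.commute_mulLeft_right a a),
    LinearMap.pow_mulLeft, LinearMap.pow_mulRight]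

variable (R) in
def IsToral (p : ℕ) (t : A) : Prop :=
  t ^ p - t ∈ Set.range (algebraMap R A)

theorem ad_pow_eq_self_of_isToral {p : ℕ} [Fact p.Prime] [CharP A p] {t : A}
    (ht : IsToral R p t) : ad R A t ^ p = ad R A t := by
  obtain ⟨z, hz⟩ := ht
  rw [ad_pow_char, ← sub_add_cancel (t ^ p) t, ← hz, map_add, ad_algebraMap, zero_add]

end InnerDerivation

section Weights

variable {Z D : Type*} [Field Z] [DivisionRing D] [Algebra Z D] (T : Submodule Z D)

def weightSpace (lam : T →ₗ[Z] Z) : Submodule Z D :=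
  ⨅ t : T, (ad Z D t).eigenspace (lam t)

variable {T}

theorem mem_weightSpace {lam : T →ₗ[Z] Z} {x : D} :
    x ∈ weightSpace T lam ↔ ∀ t : T, (t : D) * x - x * t = algebraMap Z D (lam t) * x := by
  simp [weightSpace, Algebra.smul_def]

theorem one_mem_weightSpace_zero : (1 : D) ∈ weightSpace T 0 := by
  simp [mem_weightSpace]

theorem mul_mem_weightSpace_add {lam mu : T →ₗ[Z] Z} {x y : D} (hx : x ∈ weightSpace T lam)
    (hy : y ∈ weightSpace T mu) : x * y ∈ weightSpace T (lam + mu) := by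
  rw [mem_weightSpace] at *
  intro t
  calc (t : D) * (x * y) - x * y * t = (t * x - x * t) * y + x * (t * y - y * t) := by
        noncomm_ring
    _ = algebraMap Z D ((lam + mu) t) * (x * y) := by
        rw [hx, hy, Algebra.left_comm, LinearMap.add_apply, map_add, add_mul, mul_assoc]

theorem inv_mem_weightSpace_neg {lam : T →ₗ[Z] Z} {x : D} (hx : x ∈ weightSpace T lam) :
    x⁻¹ ∈ weightSpace T (-lam) := by
  rcases eq_or_ne x 0 with rfl | hx0
  · simp
  rw [mem_weightSpace] at *
  intro t
  calc (t : D) * x⁻¹ - x⁻¹ * t = -(x⁻¹ * (t * x - x * t) * x⁻¹) := by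
        simp [mul_sub, sub_mul, mul_assoc, hx0]
    _ = algebraMap Z D ((-lam) t) * x⁻¹ := by
        rw [hx, mul_assoc, mul_inv_cancel_right₀ hx0, ← Algebra.commutes, LinearMap.neg_apply,
          map_neg, neg_mul]

variable (T) in
def weightSubgroup : AddSubgroup (T →ₗ[Z] Z) where
  carrier := {lam | weightSpace T lam ≠ ⊥}
  add_mem' {lam mu} hlam hmu := by
    obtain ⟨x, hx, hx0⟩ := (Submodule.ne_bot_iff _).1 hlam
    obtain ⟨y, hy, hy0⟩ := (Submodule.ne_bot_iff _).1 hmu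
    exact (Submodule.ne_bot_iff _).2 ⟨x * y, mul_mem_weightSpace_add hx hy, mul_ne_zero hx0 hy0⟩
  zero_mem' := (Submodule.ne_bot_iff _).2 ⟨1, one_mem_weightSpace_zero, one_ne_zero⟩
  neg_mem' {lam} hlam := by
    obtain ⟨x, hx, hx0⟩ := (Submodule.ne_bot_iff _).1 hlam
    exact (Submodule.ne_bot_iff _).2 ⟨x⁻¹, inv_mem_weightSpace_neg hx, inv_ne_zero hx0⟩

theorem mem_weightSubgroup {lam : T →ₗ[Z] Z} :
    lam ∈ weightSubgroup T ↔ weightSpace T lam ≠ ⊥ := Iff.rfl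

theorem coe_weightSubgroup : (weightSubgroup T : Set (T →ₗ[Z] Z)) =
    {lam | ∃ x : D, x ≠ 0 ∧ ∀ t : T, (t : D) * x - x * t = algebraMap Z D (lam t) * x} := by
  ext lam
  simp only [SetLike.mem_coe, mem_weightSubgroup, Submodule.ne_bot_iff, ← mem_weightSpace,
    Set.mem_ofPred_eq, and_comm]

end Weights

section Torus

variable {Z D : Type*} [Field Z] [DivisionRing D] [Algebra Z D] {T : Submodule Z D}

theorem weight_pow_eq_self_of_isToral {p : ℕ} [Fact p.Prime] [CharP D p] {lam : T →ₗ[Z] Z}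
    (hlam : lam ∈ weightSubgroup T) {t : T} (ht : IsToral Z p (t : D)) : lam t ^ p = lam t := by
  obtain ⟨x, hx, hx0⟩ := (Submodule.ne_bot_iff _).1 hlam
  exact Module.End.pow_eq_self_of_hasEigenvector (ad_pow_eq_self_of_isToral ht)
    ⟨(Submodule.mem_iInf _).1 hx t, hx0⟩

theorem weight_apply_eq_zero_of_mem_center {lam : T →ₗ[Z] Z} (hlam : lam ∈ weightSubgroup T)
    {t : T} (ht : (t : D) ∈ Set.center D) : lam t = 0 := by
  obtain ⟨x, hx, hx0⟩ := (Submodule.ne_bot_iff _).1 hlam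
  have hadx : ad Z D t x = lam t • x :=
    Module.End.mem_eigenspace_iff.1 ((Submodule.mem_iInf _).1 hx t)
  rw [ad_apply, ((Semigroup.mem_center_iff.1 ht) x).symm, sub_self, eq_comm, smul_eq_zero] at hadx
  exact hadx.resolve_right hx0

theorem iInf_eigenspace_le_weightSpace {ι : Type*} (B : Basis ι Z T) (μ : ι → Z) :
    ⨅ i, (ad Z D (B i)).eigenspace (μ i) ≤ weightSpace T (B.constr Z μ) := by
  intro x hx
  have hbasis : ((ad Z D).flip x).comp T.subtype =
      (LinearMap.toSpanSingleton Z D x).comp (B.constr Z μ) :=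
    B.ext fun i => by
      simpa [Module.End.mem_eigenspace_iff] using (Submodule.mem_iInf _).1 hx i
  exact (Submodule.mem_iInf _).2 fun t => Module.End.mem_eigenspace_iff.2 <| by
    simpa using LinearMap.congr_fun hbasis t

theorem iSup_weightSpace_eq_top {p : ℕ} [Fact p.Prime] [CharP D p] {ι : Type*} [Fintype ι]
    (B : Basis ι Z T) (hcomm : ∀ i j, Commute (B i : D) (B j))
    (htoral : ∀ i, IsToral Z p (B i : D)) : ⨆ lam, weightSpace T lam = ⊤ := by
  have : CharP Z p := (algebraMap Z D).charP (algebraMap Z D).injective p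
  rw [eq_top_iff, ← Module.End.iSup_iInf_eigenspace_eq_top_of_pow_char_eq_self
    (fun i => ad Z D (B i)) (fun i j => commute_ad (hcomm i j))
    (fun i => ad_pow_eq_self_of_isToral (htoral i))]
  exact iSup_le fun v => (iInf_eigenspace_le_weightSpace B _).trans (le_iSup _ _)

theorem mem_center_of_forall_weight_apply_eq_zero (hdec : ⨆ lam, weightSpace T lam = ⊤) (t : T)
    (ht : ∀ lam ∈ weightSubgroup T, lam t = 0) : (t : D) ∈ Set.center D := by
  have hker : ⊤ ≤ LinearMap.ker (ad Z D t) := hdec ▸ iSup_le fun lam x hx => by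
    by_cases hlam : weightSpace T lam = ⊥
    · rw [hlam, Submodule.mem_bot] at hx
      simp [hx]
    · rw [LinearMap.mem_ker, Module.End.mem_eigenspace_iff.1 ((Submodule.mem_iInf _).1 hx t),
        ht lam hlam, zero_smul]
  refine Semigroup.mem_center_iff.2 fun x => ?_
  simpa [sub_eq_zero, eq_comm] using hker Submodule.mem_top (x := x)

end Torus

theorem Submodule.span_coe_preimage_eq_top {R M : Type*} [Semiring R] [AddCommMonoid M]
    [Module R M] {p : Submodule R M} {s : Set M} (h : p = span R s) :
    span R ((↑) ⁻¹' s : Set p) = ⊤ := by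
  subst h
  exact span_span_coe_preimage

theorem Module.Basis.exists_fin_succ_zero_eq {K V : Type*} [DivisionRing K] [AddCommGroup V]
    [Module K V] {S : Set V} (hS : Submodule.span K S = ⊤) {v : V} (hv : v ∈ S) (hv0 : v ≠ 0)
    {n : ℕ} (hn : finrank K V = n + 1) :
    ∃ b : Basis (Fin (n + 1)) K V, b 0 = v ∧ ∀ i, b i ∈ S := by
  have hli : LinearIndepOn K id {v} := (linearIndepOn_singleton_iff K).2 hv0
  have hvS : {v} ⊆ S := Set.singleton_subset_iff.2 hv
  let b := Basis.extendLe hli hvS hS.ge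
  have : Module.Finite K V := Module.finite_of_finrank_eq_succ hn
  have : Fintype (hli.extend hvS) := Fintype.ofFinite _
  let e₀ := Fintype.equivFinOfCardEq ((finrank_eq_card_basis b).symm.trans hn)
  let e := e₀.trans (Equiv.swap (e₀ ⟨v, hli.subset_extend hvS rfl⟩) 0)
  refine ⟨b.reindex e, ?_, fun i => ?_⟩
  · simp [b, e]
  · simpa [b] using hli.extend_subset hvS (e.symm i).2

section TupleForms

variable {p : ℕ} [Fact p.Prime] {K M : Type*} [Field K] [CharP K p] [AddCommGroup M] [Module K M]
  {d : ℕ} (B : Basis (Fin (d + 1)) K M)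

noncomputable def formOfTuple : (Fin d → ZMod p) →+ (M →ₗ[K] K) where
  toFun v := B.constr K (Fin.cons 0 fun i => ZMod.castHom dvd_rfl K (v i))
  map_zero' := by
    rw [← map_zero (B.constr K)]
    congr 1
    ext j
    cases j using Fin.cases <;> simp
  map_add' v w := by
    rw [← map_add]
    congr 1
    ext j
    cases j using Fin.cases <;> simp

@[simp]
theorem formOfTuple_apply_zero (v : Fin d → ZMod p) : formOfTuple B v (B 0) = 0 := by
  simp [formOfTuple]

@[simp]
theorem formOfTuple_apply_succ (v : Fin d → ZMod p) (i : Fin d) :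
    formOfTuple B v (B i.succ) = ZMod.castHom dvd_rfl K (v i) := by
  simp [formOfTuple]

theorem formOfTuple_injective : Function.Injective (formOfTuple (p := p) B) := fun v w h =>
  funext fun i => ZMod.castHom_injective K <| by
    rw [← formOfTuple_apply_succ B v, h, formOfTuple_apply_succ]

theorem formOfTuple_apply_sum (φ : (Fin d → ZMod p) →ₗ[ZMod p] ZMod p) (v : Fin d → ZMod p) :
    formOfTuple B v (∑ i, ZMod.castHom dvd_rfl K (φ fun j => if i = j then 1 else 0) • B i.succ) =
      ZMod.castHom dvd_rfl K (φ v) := by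
  simp [φ.pi_apply_eq_sum_univ v, map_sum, mul_comm]

end TupleForms

section WeightGroup

variable {p : ℕ} [Fact p.Prime] {Z D : Type*} [Field Z] [CharP Z p] [DivisionRing D] [Algebra Z D]
  {T : Submodule Z D} {d : ℕ} (B : Basis (Fin (d + 1)) Z T)

theorem weightSubgroup_le_range_formOfTuple (hB0 : (B 0 : D) = 1)
    (htoral : ∀ i : Fin d, IsToral Z p (B i.succ : D)) :
    weightSubgroup T ≤ (formOfTuple B).range := by
  have : CharP D p := charP_of_injective_algebraMap' Z p
  intro lam hlam
  have hval (i : Fin d) : ∃ c : ZMod p, ZMod.castHom dvd_rfl Z c = lam (B i.succ) :=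
    exists_castHom_eq_of_pow_eq_self (weight_pow_eq_self_of_isToral hlam (htoral i))
  choose v hv using hval
  refine ⟨v, B.ext fun j => Fin.cases ?_ (fun i => ?_) j⟩
  · rw [formOfTuple_apply_zero,
      weight_apply_eq_zero_of_mem_center hlam (hB0 ▸ Set.one_mem_center)]
  · rw [formOfTuple_apply_succ, hv]

theorem range_formOfTuple_le_weightSubgroup (hB0 : (B 0 : D) = 1)
    (hcomm : ∀ i j, Commute (B i : D) (B j)) (htoral : ∀ i, IsToral Z p (B i : D))
    (hcent : Set.center D ⊆ Set.range (algebraMap Z D)) :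
    (formOfTuple B).range ≤ weightSubgroup T := by
  have : CharP D p := charP_of_injective_algebraMap' Z p
  set H := (weightSubgroup T).comap (formOfTuple B)
  suffices H = ⊤ by
    rintro _ ⟨v, rfl⟩
    exact (this ▸ AddSubgroup.mem_top v : v ∈ H)
  by_contra hH
  have hH' : AddSubgroup.toZModSubmodule p H < ⊤ := lt_top_iff_ne_top.2 fun h =>
    hH ((AddSubgroup.toZModSubmodule p).injective (h.trans (OrderIso.map_top _).symm))
  obtain ⟨φ, hφ0, hHφ⟩ := Submodule.exists_le_ker_of_lt_top _ hH'
  set t : T := ∑ i, ZMod.castHom dvd_rfl Z (φ fun j => if i = j then 1 else 0) • B i.succ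
    with ht_def
  have ht : ∀ lam ∈ weightSubgroup T, lam t = 0 := by
    intro lam hlam
    obtain ⟨v, rfl⟩ := weightSubgroup_le_range_formOfTuple B hB0 (fun i => htoral i.succ) hlam
    rw [formOfTuple_apply_sum, LinearMap.mem_ker.1 (hHφ (show v ∈ H from hlam)), map_zero]
  obtain ⟨z, hz⟩ := hcent
    (mem_center_of_forall_weight_apply_eq_zero (iSup_weightSpace_eq_top B hcomm htoral) t ht)
  have htz : t = z • B 0 := Subtype.ext <| by
    rw [Submodule.coe_smul, hB0, ← Algebra.algebraMap_eq_smul_one, hz]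
  refine hφ0 (LinearMap.ext fun v => ZMod.castHom_injective Z ?_)
  rw [← formOfTuple_apply_sum B φ v, ← ht_def, htz, map_smul, formOfTuple_apply_zero, smul_zero,
    LinearMap.zero_apply, map_zero]

theorem weightSubgroup_eq_range_formOfTuple (hB0 : (B 0 : D) = 1)
    (hcomm : ∀ i j, Commute (B i : D) (B j)) (htoral : ∀ i, IsToral Z p (B i : D))
    (hcent : Set.center D ⊆ Set.range (algebraMap Z D)) :
    weightSubgroup T = (formOfTuple B).range :=
  (weightSubgroup_le_range_formOfTuple B hB0 fun i => htoral i.succ).antisymm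
    (range_formOfTuple_le_weightSubgroup B hB0 hcomm htoral hcent)

end WeightGroup

theorem weight_group_of_torus_general
    (p : ℕ) (hp : p.Prime)
    (Z : Type*) [Field Z] (D : Type*) [DivisionRing D] [Algebra Z D] [CharP D p]
    (hcent : Set.range (algebraMap Z D) = Set.center D)
    (T : Submodule Z D) (h1T : (1 : D) ∈ T)
    (hTcomm : ∀ x ∈ T, ∀ y ∈ T, x * y = y * x)
    (hToral : T = Submodule.span Z {t : D | t ∈ T ∧ t ^ p - t ∈ Set.range (algebraMap Z D)})
    (d : ℕ) (hrank : Module.finrank Z T = d + 1) :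
    ∃ Λ : AddSubgroup (T →ₗ[Z] Z),
      (Λ : Set (T →ₗ[Z] Z)) =
        {lam | ∃ x : D, x ≠ 0 ∧
          ∀ t : T, (t : D) * x - x * (t : D) = algebraMap Z D (lam t) * x} ∧
      (∀ lam ∈ Λ, ∀ t : T,
        (t : D) ^ p - (t : D) ∈ Set.range (algebraMap Z D) → (lam t) ^ p = lam t) ∧
      Nonempty (Λ ≃+ (Fin d → ZMod p)) ∧
      Nat.card Λ = p ^ d := by
  have : Fact p.Prime := ⟨hp⟩
  have : CharP Z p := (algebraMap Z D).charP (algebraMap Z D).injective p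
  obtain ⟨B, hB0, htoral⟩ := Module.Basis.exists_fin_succ_zero_eq
    (Submodule.span_coe_preimage_eq_top hToral) (v := ⟨1, h1T⟩) ⟨h1T, 0, by simp⟩
    (by simp) hrank
  have hΛ : weightSubgroup T = (formOfTuple B).range :=
    weightSubgroup_eq_range_formOfTuple B (congrArg Subtype.val hB0)
      (fun i j => hTcomm _ (B i).2 _ (B j).2) (fun i => (htoral i).2) hcent.superset
  let e : (Fin d → ZMod p) ≃+ weightSubgroup T :=
    (AddMonoidHom.ofInjective (formOfTuple_injective B)).trans
      (AddEquiv.addSubgroupCongr hΛ.symm)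
  refine ⟨weightSubgroup T, coe_weightSubgroup, fun lam hlam t ht =>
    weight_pow_eq_self_of_isToral hlam ht, ⟨e.symm⟩, ?_⟩
  rw [← Nat.card_congr e.toEquiv, Nat.card_eq_fintype_card, Fintype.card_fun, ZMod.card,
    Fintype.card_fin]

/-- Let `D` be a `p`-division algebra with centre `Z` and `T ⊆ D` a torus of rank `d`
containing `1`. Then the set `Λ` of weights of `T` in `D` is an additive subgroup of
`Hom_Z(T, Z)`, every weight takes values in the prime field `𝔽_p` (on toral elements),
and `Λ ≃ (ℤ/pℤ)^d`; in particular `|Λ| = p^d`. -/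
theorem weight_group_of_torus
    (p : ℕ) (hp : p.Prime)
    (Z : Type*) [Field Z] (D : Type*) [DivisionRing D] [Algebra Z D] [CharP D p]
    (hcent : Set.range (algebraMap Z D) = Set.center D)
    [FiniteDimensional Z D] (hpdim : ∃ k : ℕ, Module.finrank Z D = p ^ k)
    (T : Submodule Z D) (h1T : (1 : D) ∈ T)
    (hTcomm : ∀ x ∈ T, ∀ y ∈ T, x * y = y * x)
    (hToral : T = Submodule.span Z {t : D | t ∈ T ∧ t ^ p - t ∈ Set.range (algebraMap Z D)})
    (d : ℕ) (hrank : Module.finrank Z T = d + 1) :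
    ∃ Λ : AddSubgroup (T →ₗ[Z] Z),
      (Λ : Set (T →ₗ[Z] Z)) =
        {lam | ∃ x : D, x ≠ 0 ∧
          ∀ t : T, (t : D) * x - x * (t : D) = algebraMap Z D (lam t) * x} ∧
      (∀ lam ∈ Λ, ∀ t : T,
        (t : D) ^ p - (t : D) ∈ Set.range (algebraMap Z D) → (lam t) ^ p = lam t) ∧
      Nonempty (Λ ≃+ (Fin d → ZMod p)) ∧
      Nat.card Λ = p ^ d :=
  weight_group_of_torus_general p hp Z D hcent T h1T hTcomm hToral d hrank
end

section
/- Let D be a division ring finite-dimensional over its infinite centre Z, and let V ⊆ D(X) be a Z(X)-subspace with dim_{Z(X)} V = n. Then there exists a nonzero polynomial f ∈ Z[X] such that for every λ ∈ Z^q with f(λ) ≠ 0, the specialization V̄_λ = π_λ(V ∩ D[X]) is a Z-subspace of D of dimension n. -/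
open scoped TensorProduct

attribute [local instance] Algebra.TensorProduct.rightAlgebra

/-- The natural inclusion `D[X] = D ⊗[Z] Z[X] → D(X) = D ⊗[Z] Z(X)`. -/
noncomputable def polyIncl (Z : Type*) [Field Z] (D : Type*) [DivisionRing D] [Algebra Z D]
    (q : ℕ) (ZX : Type*) [Field ZX] [Algebra (MvPolynomial (Fin q) Z) ZX]
    [Algebra Z ZX] [IsScalarTower Z (MvPolynomial (Fin q) Z) ZX] :
    (D ⊗[Z] MvPolynomial (Fin q) Z) →ₐ[Z] D ⊗[Z] ZX :=
  Algebra.TensorProduct.map (AlgHom.id Z D) (IsScalarTower.toAlgHom Z (MvPolynomial (Fin q) Z) ZX)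

/-- The specialization map `π_λ = id ⊗ (evaluation at λ) : D[X] → D`. -/
noncomputable def specHom (Z : Type*) [Field Z] (D : Type*) [DivisionRing D] [Algebra Z D]
    (q : ℕ) (lam : Fin q → Z) :
    (D ⊗[Z] MvPolynomial (Fin q) Z) →ₐ[Z] D :=
  Algebra.TensorProduct.lift (AlgHom.id Z D) ((Algebra.ofId Z D).comp (MvPolynomial.aeval lam))
    (fun a b => (Algebra.commutes (MvPolynomial.aeval lam b) a).symm)

/-- The specialization `V̄_λ = π_λ(V ∩ D[X])` of a `Z(X)`-subspace `V ⊆ D(X)`, as a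
`Z`-subspace of `D`. -/
noncomputable def specSubmodule (Z : Type*) [Field Z] (D : Type*) [DivisionRing D] [Algebra Z D]
    (q : ℕ) (ZX : Type*) [Field ZX] [Algebra (MvPolynomial (Fin q) Z) ZX]
    [Algebra Z ZX] [IsScalarTower Z (MvPolynomial (Fin q) Z) ZX]
    (V : Submodule ZX (D ⊗[Z] ZX)) (lam : Fin q → Z) : Submodule Z D :=
  Submodule.map (specHom Z D q lam).toLinearMap
    (Submodule.comap (polyIncl Z D q ZX).toLinearMap (V.restrictScalars Z))

/-!
Clearing denominators in a `Z(X)`-basis of `V` gives `n` vectors of `V ∩ D[X]` whose coordinate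
matrix `P` (in a `Z`-basis of `D`) has a nonzero `n × n` minor `f = det P_g`. Cramer's rule gives
`f • v = ((v ∘ g) ᵥ* adj P_g) ᵥ* P` for every `v ∈ V ∩ D[X]`, an identity over `Z[X]` that
survives specialization. So wherever `f(λ) ≠ 0`, the specialized rows of `P` are linearly
independent and span `V̄_λ`.
-/

open Module Matrix

theorem Matrix.exists_det_submatrix_ne_zero {K ι : Type*} [Field K] [Fintype ι] {n : ℕ}
    {M : Matrix (Fin n) ι K} (hM : LinearIndependent K M.row) :
    ∃ g : Fin n → ι, (M.submatrix id g).det ≠ 0 := by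
  obtain ⟨κ, a, -, hspan, hli⟩ := exists_linearIndependent' K M.col
  have hcols : Submodule.span K (Set.range M.col) = ⊤ :=
    Submodule.eq_top_of_finrank_eq (by rw [← rank_eq_finrank_span_cols, hM.rank_matrix]; simp)
  let e := (Basis.mk hli (by rw [hspan, hcols])).indexEquiv (Pi.basisFun K (Fin n))
  refine ⟨a ∘ e.symm, ?_⟩
  rw [← isUnit_iff_ne_zero, ← isUnit_iff_isUnit_det, ← linearIndependent_cols_iff_isUnit]
  exact hli.comp e.symm e.symm.injective

theorem Matrix.linearIndependent_row_of_det_submatrix_ne_zero {K m ι : Type*} [Field K]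
    [Fintype m] [DecidableEq m] {M : Matrix m ι K} {g : m → ι}
    (h : (M.submatrix id g).det ≠ 0) : LinearIndependent K M.row :=
  (linearIndependent_rows_iff_isUnit.mpr ((isUnit_iff_isUnit_det _).mpr h.isUnit)).of_comp
    (LinearMap.funLeft K K g)

section Adjugate
variable {R S m ι : Type*} [CommRing R] [CommRing S] [Fintype m] [DecidableEq m]

/-- Cramer's rule for the rows of `M`: a vector in their span is determined by its entries at the
columns `g`. -/
theorem Matrix.det_submatrix_smul_eq_of_mem_span_row {M : Matrix m ι R} (g : m → ι) {v : ι → R}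
    (hv : v ∈ Submodule.span R (Set.range M.row)) :
    (M.submatrix id g).det • v = (v ∘ g) ᵥ* adjugate (M.submatrix id g) ᵥ* M := by
  obtain ⟨c, rfl⟩ := (Submodule.mem_span_range_iff_exists_fun R).mp hv
  have hc : (∑ i, c i • M.row i) = c ᵥ* M := (vecMul_eq_sum c M).symm
  have hg : (c ᵥ* M) ∘ g = c ᵥ* M.submatrix id g := rfl
  rw [hc, hg, vecMul_vecMul c, mul_adjugate, vecMul_smul, vecMul_one, smul_vecMul]

theorem Matrix.map_vecMul_adjugate_vecMul (f : R →+* S) (M : Matrix m ι R) (g : m → ι)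
    (v : ι → R) :
    f ∘ ((v ∘ g) ᵥ* adjugate (M.submatrix id g) ᵥ* M)
      = ((f ∘ v) ∘ g) ᵥ* adjugate ((M.map f).submatrix id g) ᵥ* M.map f := by
  have hadj : (adjugate (M.submatrix id g)).map f = adjugate ((M.map f).submatrix id g) :=
    f.map_adjugate _
  ext i
  simp [RingHom.map_vecMul, hadj, Function.comp_assoc]

theorem Matrix.det_submatrix_map (f : R →+* S) (M : Matrix m ι R) (g : m → ι) :
    ((M.map f).submatrix id g).det = f (M.submatrix id g).det :=
  (f.map_det _).symm

end Adjugate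

section Specialization
variable (k : Type*) {R K ι : Type*} [Field k] [CommRing R] [Algebra k R] [Field K] [Algebra R K]
  [Algebra k K] [IsScalarTower k R K]

/-- `W ∩ R^ι`, for a `K`-subspace `W ⊆ K^ι`. -/
def integralPoints (W : Submodule K (ι → K)) : Submodule k (ι → R) :=
  (W.restrictScalars k).comap ((IsScalarTower.toAlgHom k R K).toLinearMap.compLeft ι)

def specialization (W : Submodule K (ι → K)) (φ : R →ₐ[k] k) : Submodule k (ι → k) :=
  (integralPoints k W).map (φ.toLinearMap.compLeft ι)

variable {k} [Fintype ι] {W : Submodule K (ι → K)} {P : Matrix (Fin (finrank K W)) ι R}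

theorem span_row_map_eq_of_row_mem_integralPoints (hP : ∀ j, P.row j ∈ integralPoints k W)
    (hli : LinearIndependent K (P.map (algebraMap R K)).row) :
    Submodule.span K (Set.range (P.map (algebraMap R K)).row) = W :=
  Submodule.eq_of_le_of_finrank_eq (Submodule.span_le.mpr (Set.range_subset_iff.mpr hP))
    (by rw [finrank_span_eq_card hli, Fintype.card_fin])

variable [IsFractionRing R K]

theorem det_submatrix_smul_eq_of_mem_integralPoints (hP : ∀ j, P.row j ∈ integralPoints k W)
    (hli : LinearIndependent K (P.map (algebraMap R K)).row) (g : Fin (finrank K W) → ι)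
    {v : ι → R} (hv : v ∈ integralPoints k W) :
    (P.submatrix id g).det • v = (v ∘ g) ᵥ* adjugate (P.submatrix id g) ᵥ* P := by
  have hvK : algebraMap R K ∘ v ∈ Submodule.span K (Set.range (P.map (algebraMap R K)).row) := by
    rw [span_row_map_eq_of_row_mem_integralPoints hP hli]
    exact hv
  apply (IsFractionRing.injective R K).comp_left
  dsimp only
  rw [map_vecMul_adjugate_vecMul, ← det_submatrix_smul_eq_of_mem_span_row g hvK]
  ext i
  simp [det_submatrix_map]

theorem specialization_eq_span_row (hP : ∀ j, P.row j ∈ integralPoints k W)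
    (hli : LinearIndependent K (P.map (algebraMap R K)).row) (g : Fin (finrank K W) → ι)
    {φ : R →ₐ[k] k} (hφ : φ (P.submatrix id g).det ≠ 0) :
    specialization k W φ = Submodule.span k (Set.range (P.map φ).row) := by
  apply le_antisymm
  · rintro _ ⟨v, hv, rfl⟩
    have key := congrArg ((φ : R →+* k) ∘ ·)
      (det_submatrix_smul_eq_of_mem_integralPoints hP hli g hv)
    rw [map_vecMul_adjugate_vecMul, AlgHom.coe_toRingHom] at key
    have hmem :
        φ (P.submatrix id g).det • (φ ∘ v) ∈ Submodule.span k (Set.range (P.map φ).row) := by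
      have hsmul : φ ∘ ((P.submatrix id g).det • v) = φ (P.submatrix id g).det • (φ ∘ v) := by
        ext; simp
      rw [← hsmul, key]
      exact (Submodule.mem_span_range_iff_exists_fun k).mpr ⟨_, (vecMul_eq_sum _ _).symm⟩
    exact (Submodule.smul_mem_iff _ hφ).mp hmem
  · rw [Submodule.span_le]
    rintro _ ⟨j, rfl⟩
    exact ⟨P.row j, hP j, rfl⟩

theorem exists_linearIndependent_row_mem_integralPoints (W : Submodule K (ι → K)) :
    ∃ P : Matrix (Fin (finrank K W)) ι R, (∀ j, P.row j ∈ integralPoints k W) ∧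
      LinearIndependent K (P.map (algebraMap R K)).row := by
  let v := Module.finBasis K W
  choose d hd using fun j => IsLocalization.exist_integer_multiples_of_finite
    (nonZeroDivisors R) (v j : ι → K)
  choose P hP using hd
  have hrow : ∀ j, algebraMap R K ∘ P j = algebraMap R K (d j) • (v j : ι → K) := by
    intro j; ext i; simp [hP j i, Algebra.smul_def]
  refine ⟨Matrix.of P, fun j => ?_, ?_⟩
  · show algebraMap R K ∘ P j ∈ W
    rw [hrow]
    exact W.smul_mem _ (v j).2
  · have hd0 : ∀ j, algebraMap R K (d j) ≠ 0 := fun j =>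
      (IsLocalization.map_units K (d j)).ne_zero
    rw [show ((Matrix.of P).map (algebraMap R K)).row = fun j => Units.mk0 _ (hd0 j) • (v j : ι → K)
      from funext hrow]
    exact (v.linearIndependent.map' W.subtype W.ker_subtype).units_smul _

theorem exists_ne_zero_forall_finrank_specialization_eq (W : Submodule K (ι → K)) :
    ∃ f : R, f ≠ 0 ∧ ∀ φ : R →ₐ[k] k, φ f ≠ 0 → finrank k (specialization k W φ) = finrank K W := by
  obtain ⟨P, hP, hli⟩ := exists_linearIndependent_row_mem_integralPoints (k := k) (R := R) W
  obtain ⟨g, hg⟩ := exists_det_submatrix_ne_zero hli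
  refine ⟨(P.submatrix id g).det, fun h => hg ?_, fun φ hφ => ?_⟩
  · rw [det_submatrix_map, h, map_zero]
  · have hφ' : ((P.map φ).submatrix id g).det ≠ 0 :=
      (det_submatrix_map (φ : R →+* k) P g).trans_ne hφ
    rw [specialization_eq_span_row hP hli g hφ,
      finrank_span_eq_card (linearIndependent_row_of_det_submatrix_ne_zero hφ'), Fintype.card_fin]

end Specialization

section Coordinates
variable {Z D ι : Type*} [CommRing Z] [Ring D] [Algebra Z D] (S : Type*) [CommRing S] [Algebra Z S]

theorem Algebra.TensorProduct.rightAlgebra_smul_tmul (r s : S) (d : D) :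
    r • (d ⊗ₜ[Z] s) = d ⊗ₜ[Z] (r * s) := by
  change (1 ⊗ₜ[Z] r) * (d ⊗ₜ[Z] s) = _
  rw [Algebra.TensorProduct.tmul_mul_tmul, one_mul]

noncomputable def tensorCommRight : D ⊗[Z] S ≃ₗ[S] S ⊗[Z] D where
  __ := TensorProduct.comm Z D S
  map_smul' r x := by
    induction x using TensorProduct.induction_on with
    | zero => simp
    | tmul d s => simp [Algebra.TensorProduct.rightAlgebra_smul_tmul, TensorProduct.smul_tmul']
    | add x y hx hy => simp_all

variable [Fintype ι]

noncomputable def tensorCoord (b : Basis ι Z D) : D ⊗[Z] S ≃ₗ[S] (ι → S) :=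
  tensorCommRight S ≪≫ₗ Algebra.TensorProduct.equivPiOfFiniteBasis S b

@[simp] theorem tensorCoord_tmul (b : Basis ι Z D) (d : D) (s : S) :
    tensorCoord S b (d ⊗ₜ s) = fun i => b.repr d i • s := by
  ext i; simp [tensorCoord, tensorCommRight]

end Coordinates

section Transfer
variable {Z D ι : Type*} [Field Z] [DivisionRing D] [Algebra Z D] [Fintype ι] (b : Basis ι Z D)
  (q : ℕ) (ZX : Type*) [Field ZX] [Algebra (MvPolynomial (Fin q) Z) ZX] [Algebra Z ZX]
  [IsScalarTower Z (MvPolynomial (Fin q) Z) ZX]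

theorem tensorCoord_polyIncl (w : D ⊗[Z] MvPolynomial (Fin q) Z) :
    tensorCoord ZX b (polyIncl Z D q ZX w)
      = algebraMap (MvPolynomial (Fin q) Z) ZX ∘ tensorCoord _ b w := by
  induction w using TensorProduct.induction_on with
  | zero => ext; simp
  | tmul d p =>
    ext
    simp [polyIncl, Algebra.smul_def, IsScalarTower.algebraMap_apply Z (MvPolynomial (Fin q) Z) ZX]
  | add x y hx hy => ext; simp_all

theorem specHom_tmul (lam : Fin q → Z) (d : D) (p : MvPolynomial (Fin q) Z) :
    specHom Z D q lam (d ⊗ₜ p) = d * algebraMap Z D (MvPolynomial.eval lam p) :=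
  Algebra.TensorProduct.lift_tmul _ _ _ d p

theorem equivFun_specHom (lam : Fin q → Z) (w : D ⊗[Z] MvPolynomial (Fin q) Z) :
    b.equivFun (specHom Z D q lam w) = MvPolynomial.eval lam ∘ tensorCoord _ b w := by
  induction w using TensorProduct.induction_on with
  | zero => ext; simp
  | tmul d p =>
    ext i
    simp [specHom_tmul, ← Algebra.commutes, ← Algebra.smul_def, mul_comm]
  | add x y hx hy => ext; simp_all

theorem specSubmodule_eq_map_specialization (V : Submodule ZX (D ⊗[Z] ZX)) (lam : Fin q → Z) :
    specSubmodule Z D q ZX V lam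
      = (specialization Z (V.map (tensorCoord ZX b).toLinearMap) (MvPolynomial.aeval lam)).map
          b.equivFun.symm.toLinearMap := by
  ext x
  constructor
  · rintro ⟨w, hw, rfl⟩
    refine ⟨_, ⟨tensorCoord _ b w, ?_, rfl⟩, ?_⟩
    · show algebraMap _ ZX ∘ tensorCoord _ b w ∈ V.map (tensorCoord ZX b).toLinearMap
      rw [← tensorCoord_polyIncl]
      exact Submodule.mem_map_of_mem hw
    · show b.equivFun.symm (MvPolynomial.eval lam ∘ tensorCoord _ b w) = specHom Z D q lam w
      rw [LinearEquiv.symm_apply_eq, equivFun_specHom]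
  · rintro ⟨_, ⟨v, ⟨y, hy, hyv⟩, rfl⟩, rfl⟩
    refine ⟨(tensorCoord _ b).symm v, ?_, ?_⟩
    · show polyIncl Z D q ZX ((tensorCoord _ b).symm v) ∈ V
      have hyw : polyIncl Z D q ZX ((tensorCoord _ b).symm v) = y := by
        apply (tensorCoord ZX b).injective
        rw [tensorCoord_polyIncl, LinearEquiv.apply_symm_apply]
        exact hyv.symm
      rwa [hyw]
    · show specHom Z D q lam ((tensorCoord _ b).symm v)
        = b.equivFun.symm (MvPolynomial.eval lam ∘ v)
      rw [LinearEquiv.eq_symm_apply, equivFun_specHom, LinearEquiv.apply_symm_apply]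

end Transfer

theorem generic_dimension_of_specialization_general
    (Z : Type*) [Field Z] (D : Type*) [DivisionRing D] [Algebra Z D]
    [FiniteDimensional Z D]
    (q : ℕ) (ZX : Type*) [Field ZX] [Algebra (MvPolynomial (Fin q) Z) ZX]
    [IsFractionRing (MvPolynomial (Fin q) Z) ZX]
    [Algebra Z ZX] [IsScalarTower Z (MvPolynomial (Fin q) Z) ZX]
    (V : Submodule ZX (D ⊗[Z] ZX)) (n : ℕ) (hV : Module.finrank ZX V = n) :
    ∃ f : MvPolynomial (Fin q) Z, f ≠ 0 ∧
      ∀ lam : Fin q → Z, MvPolynomial.eval lam f ≠ 0 →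
        Module.finrank Z (specSubmodule Z D q ZX V lam) = n := by
  obtain ⟨f, hf0, hf⟩ := exists_ne_zero_forall_finrank_specialization_eq (k := Z)
    (R := MvPolynomial (Fin q) Z)
    (V.map (tensorCoord ZX (finBasis Z D)).toLinearMap)
  refine ⟨f, hf0, fun lam hlam => ?_⟩
  rw [specSubmodule_eq_map_specialization (finBasis Z D), LinearEquiv.finrank_map_eq,
    hf _ hlam, LinearEquiv.finrank_map_eq, hV]

/-- Let `D` be a division ring finite-dimensional over its infinite centre `Z`, and let
`V ⊆ D(X)` be a `Z(X)`-subspace of dimension `n`. Then there is a nonzero `f ∈ Z[X]` such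
that for every `λ ∈ Z^q` with `f(λ) ≠ 0`, the specialization `V̄_λ = π_λ(V ∩ D[X])` is a
`Z`-subspace of `D` of dimension `n`. -/
theorem generic_dimension_of_specialization
    (Z : Type*) [Field Z] [Infinite Z] (D : Type*) [DivisionRing D] [Algebra Z D]
    (hcent : Set.range (algebraMap Z D) = Set.center D)
    [FiniteDimensional Z D]
    (q : ℕ) (ZX : Type*) [Field ZX] [Algebra (MvPolynomial (Fin q) Z) ZX]
    [IsFractionRing (MvPolynomial (Fin q) Z) ZX]
    [Algebra Z ZX] [IsScalarTower Z (MvPolynomial (Fin q) Z) ZX]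
    (V : Submodule ZX (D ⊗[Z] ZX)) (n : ℕ) (hV : Module.finrank ZX V = n) :
    ∃ f : MvPolynomial (Fin q) Z, f ≠ 0 ∧
      ∀ lam : Fin q → Z, MvPolynomial.eval lam f ≠ 0 →
        Module.finrank Z (specSubmodule Z D q ZX V lam) = n :=
  generic_dimension_of_specialization_general Z D q ZX V n hV
end

section
/- Let G be a finite-dimensional Lie algebra over a field F of characteristic p > 0 equipped with a map x ↦ x^{[p]} satisfying ad(x^{[p]}) = (ad x)^p for all x ∈ G, and let L ⊆ G be a Lie subalgebra such that the only Lie subalgebra of G containing L and closed under x ↦ x^{[p]} is G itself (G is a p-envelope of L). Set q = dim_F G − dim_F L. Then there exists a chain of Lie ideals of G, L = L_0 ⊆ L_1 ⊆ ⋯ ⊆ L_q = G, together with elements x_1,…,x_q ∈ G and y_0,…,y_{q−1} with y_{i−1} ∈ L_{i−1}, such that for every i ∈ {1,…,q}: L_i = L_{i−1} + F·x_i with x_i ∉ L_{i−1}, and x_i = y_{i−1}^{[p]}. -/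
/-!
The normalizer of `L` is closed under the `p`-map, because `ad (x^[p]) = (ad x)^p` preserves `L`
whenever `ad x` does; hence it is all of `G` and `L` is an ideal. A proper ideal `I ⊇ L` cannot be
closed under the `p`-map, so some `y ∈ I` has `y^[p] ∉ I`; since `[y^[p], G] = (ad y)^p G ⊆ I`,
the space `I + F·y^[p]` is again an ideal, of dimension one more. Repeating this `q` times
reaches `G`.
-/

open Module LieAlgebra

section CommRing

variable {R L : Type*} [CommRing R] [LieRing L] [LieAlgebra R L]

def LieSubalgebra.IsPEnvelope (H : LieSubalgebra R L) (pmap : L → L) : Prop :=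
  ∀ S : LieSubalgebra R L, H ≤ S → (∀ x ∈ S, pmap x ∈ S) → S = ⊤

def IsPPowerIdealChain (pmap : L → L) {n : ℕ} (Lc : Fin (n + 1) → LieIdeal R L)
    (x y : Fin n → L) : Prop :=
  (Lc (Fin.last n) : Set L) = Set.univ ∧
  ∀ i : Fin n,
    x i ∉ Lc i.castSucc ∧
    ((Lc i.succ : Set L) = {g : L | ∃ c : R, ∃ h ∈ Lc i.castSucc, g = c • x i + h}) ∧
    y i ∈ Lc i.castSucc ∧
    pmap (y i) = x i

variable {p : ℕ} {pmap : L → L}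

theorem IsPPowerIdealChain.cons {n : ℕ} {I : LieIdeal R L} {x₀ y₀ : L} (hx₀ : x₀ ∉ I)
    (hy₀ : y₀ ∈ I) (hxy₀ : pmap y₀ = x₀) {Lc : Fin (n + 1) → LieIdeal R L} {x y : Fin n → L}
    (h₀ : (Lc 0 : Set L) = {g : L | ∃ c : R, ∃ h ∈ I, g = c • x₀ + h})
    (hLc : IsPPowerIdealChain pmap Lc x y) :
    IsPPowerIdealChain pmap (Fin.cons I Lc : Fin (n + 2) → LieIdeal R L)
      (Fin.cons x₀ x : Fin (n + 1) → L) (Fin.cons y₀ y : Fin (n + 1) → L) := by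
  refine ⟨by simpa [← Fin.succ_last] using hLc.1, fun i ↦ ?_⟩
  induction i using Fin.cases with
  | zero => simpa using ⟨hx₀, h₀, hy₀, hxy₀⟩
  | succ i => simpa [← Fin.succ_castSucc] using hLc.2 i

theorem lie_pmap_eq (hpmap : ∀ x : L, ad R L (pmap x) = ad R L x ^ p) (x y : L) :
    ⁅pmap x, y⁆ = (ad R L x ^ p) y := by
  rw [← hpmap]; rfl

theorem LieSubalgebra.pmap_mem_normalizer
    (hpmap : ∀ x : L, ad R L (pmap x) = ad R L x ^ p) {H : LieSubalgebra R L} {x : L}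
    (hx : x ∈ H.normalizer) : pmap x ∈ H.normalizer := by
  rw [H.mem_normalizer_iff] at hx ⊢
  intro y hy
  rw [lie_pmap_eq hpmap, Module.End.pow_apply]
  exact Set.MapsTo.iterate (f := ad R L x) hx p hy

theorem LieSubalgebra.exists_lieIdeal_coe_eq_of_isPEnvelope
    (hpmap : ∀ x : L, ad R L (pmap x) = ad R L x ^ p) {H : LieSubalgebra R L}
    (henv : H.IsPEnvelope pmap) :
    ∃ I : LieIdeal R L, (I : LieSubalgebra R L) = H := by
  have hN : H.normalizer = ⊤ :=
    henv _ H.le_normalizer fun _ ↦ LieSubalgebra.pmap_mem_normalizer hpmap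
  exact (H.exists_lieIdeal_coe_eq_iff).2 fun x _ hy ↦
    H.ideal_in_normalizer (hN ▸ LieSubalgebra.mem_top x) hy

theorem LieIdeal.lie_pmap_mem (hpmap : ∀ x : L, ad R L (pmap x) = ad R L x ^ p) (hp : p ≠ 0)
    (I : LieIdeal R L) {y : L} (hy : y ∈ I) (z : L) : ⁅pmap y, z⁆ ∈ I := by
  obtain ⟨k, rfl⟩ := Nat.exists_eq_succ_of_ne_zero hp
  rw [lie_pmap_eq hpmap, pow_succ', Module.End.mul_apply]
  exact lie_mem_left R L I y _ hy

theorem LieIdeal.exists_pmap_notMem {H : LieSubalgebra R L} (henv : H.IsPEnvelope pmap)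
    {I : LieIdeal R L} (hHI : H ≤ I) (hI : I ≠ ⊤) : ∃ y ∈ I, pmap y ∉ I := by
  by_contra! hcl
  refine hI (SetLike.coe_injective ?_)
  rw [← LieIdeal.coe_toLieSubalgebra, henv _ hHI hcl]
  rfl

theorem LieIdeal.exists_toSubmodule_eq_span_insert (I : LieIdeal R L) {x : L}
    (hx : ∀ z, ⁅x, z⁆ ∈ I) :
    ∃ J : LieIdeal R L, J.toSubmodule = Submodule.span R (insert x (I.toSubmodule : Set L)) := by
  refine ((Submodule.span R _).exists_lieSubmodule_coe_eq_iff L).2 fun z m hm ↦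
    Submodule.subset_span (Set.mem_insert_of_mem _ ?_)
  obtain ⟨a, h, hh, rfl⟩ := Submodule.mem_span_insert.1 hm
  rw [Submodule.span_eq] at hh
  rw [lie_add, lie_smul, ← lie_skew]
  exact I.add_mem (I.smul_mem a (I.neg_mem (hx z))) (I.lie_mem hh)

theorem LieIdeal.mem_iff_of_toSubmodule_eq_span_insert {I J : LieIdeal R L} {x : L}
    (hJ : J.toSubmodule = Submodule.span R (insert x (I.toSubmodule : Set L))) {g : L} :
    g ∈ J ↔ ∃ c : R, ∃ h ∈ I, g = c • x + h := by
  rw [← LieSubmodule.mem_toSubmodule, hJ, Submodule.mem_span_insert, Submodule.span_eq]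
  rfl

end CommRing

theorem exists_isPPowerIdealChain {F G : Type*} [Field F] [LieRing G] [LieAlgebra F G]
    [FiniteDimensional F G] {p : ℕ} (hp : p ≠ 0) {pmap : G → G}
    (hpmap : ∀ x : G, ad F G (pmap x) = ad F G x ^ p) {H : LieSubalgebra F G}
    (henv : H.IsPEnvelope pmap) :
    ∀ (n : ℕ) (I : LieIdeal F G), H ≤ I → finrank F I.toSubmodule + n = finrank F G →
      ∃ (Lc : Fin (n + 1) → LieIdeal F G) (x y : Fin n → G),
        Lc 0 = I ∧ IsPPowerIdealChain pmap Lc x y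
  | 0, I, _, hrank => by
    have hI : I = ⊤ :=
      (LieSubmodule.toSubmodule_eq_top I).1 (Submodule.eq_top_of_finrank_eq hrank)
    exact ⟨fun _ ↦ I, ![], ![], rfl, by simp [hI], fun i ↦ i.elim0⟩
  | n + 1, I, hHI, hrank => by
    have hI : I ≠ ⊤ := by
      rintro rfl
      rw [LieSubmodule.top_toSubmodule, finrank_top] at hrank
      omega
    obtain ⟨y₀, hy₀, hx₀⟩ := I.exists_pmap_notMem henv hHI hI
    obtain ⟨J, hJ⟩ := I.exists_toSubmodule_eq_span_insert (I.lie_pmap_mem hpmap hp hy₀)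
    have hIJ : I ≤ J := fun z hz ↦
      (LieIdeal.mem_iff_of_toSubmodule_eq_span_insert hJ).2 ⟨0, z, hz, by simp⟩
    have hJrank : finrank F J.toSubmodule = finrank F I.toSubmodule + 1 := by
      rw [hJ, Submodule.span_insert, Submodule.span_eq, sup_comm]
      exact Submodule.finrank_sup_span_singleton hx₀
    obtain ⟨Lc, x, y, h₀, hLc⟩ :=
      exists_isPPowerIdealChain hp hpmap henv n J (hHI.trans hIJ) (by omega)
    refine ⟨Fin.cons I Lc, Fin.cons (pmap y₀) x, Fin.cons y₀ y, rfl, hLc.cons hx₀ hy₀ rfl ?_⟩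
    ext g
    rw [h₀]
    exact LieIdeal.mem_iff_of_toSubmodule_eq_span_insert hJ

theorem p_envelope_ideal_chain_general
    (p : ℕ) (hp : p ≠ 0)
    (F : Type*) [Field F]
    (G : Type*) [LieRing G] [LieAlgebra F G] [FiniteDimensional F G]
    (pmap : G → G)
    (hpmap : ∀ x : G, LieAlgebra.ad F G (pmap x) = (LieAlgebra.ad F G x) ^ p)
    (L : LieSubalgebra F G)
    (henv : ∀ S : LieSubalgebra F G, L ≤ S → (∀ x ∈ S, pmap x ∈ S) → S = ⊤)
    (q : ℕ) (hq : q = Module.finrank F G - Module.finrank F L) :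
    ∃ (Lc : Fin (q + 1) → LieIdeal F G) (x y : Fin q → G),
      ((Lc 0 : Set G) = (L : Set G)) ∧
      ((Lc (Fin.last q) : Set G) = Set.univ) ∧
      ∀ i : Fin q,
        x i ∉ Lc i.castSucc ∧
        ((Lc i.succ : Set G) = {g : G | ∃ c : F, ∃ h ∈ Lc i.castSucc, g = c • x i + h}) ∧
        y i ∈ Lc i.castSucc ∧
        pmap (y i) = x i := by
  obtain ⟨I, hI⟩ := L.exists_lieIdeal_coe_eq_of_isPEnvelope hpmap henv
  have hrank : finrank F I.toSubmodule + q = finrank F G := by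
    have hIL : finrank F I.toSubmodule = finrank F L := by
      rw [← LieIdeal.toLieSubalgebra_toSubmodule, hI]
      rfl
    have : finrank F L ≤ finrank F G := Submodule.finrank_le L.toSubmodule
    omega
  obtain ⟨Lc, x, y, h₀, hLc⟩ := exists_isPPowerIdealChain hp hpmap henv q I hI.ge hrank
  exact ⟨Lc, x, y, by rw [h₀, ← hI]; rfl, hLc⟩

/-- Let `G` be a finite-dimensional Lie algebra over a field `F` of characteristic `p > 0`
equipped with a map `x ↦ x^[p]` satisfying `ad (x^[p]) = (ad x)^p`, and let `L ⊆ G` be a Lie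
subalgebra such that the only Lie subalgebra of `G` containing `L` and closed under the
`p`-map is `G` itself (`G` is a `p`-envelope of `L`). With `q = dim G − dim L`, there is a
chain of Lie ideals `L = L_0 ⊆ L_1 ⊆ ⋯ ⊆ L_q = G` and elements `x_1,…,x_q`, `y_0,…,y_{q−1}`
with `y_{i−1} ∈ L_{i−1}`, such that `L_i = L_{i−1} + F·x_i` with `x_i ∉ L_{i−1}` and
`x_i = y_{i−1}^[p]`. -/
theorem p_envelope_ideal_chain
    (p : ℕ) (hp : p ≠ 0)
    (F : Type*) [Field F] [CharP F p]
    (G : Type*) [LieRing G] [LieAlgebra F G] [FiniteDimensional F G]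
    (pmap : G → G)
    (hpmap : ∀ x : G, LieAlgebra.ad F G (pmap x) = (LieAlgebra.ad F G x) ^ p)
    (L : LieSubalgebra F G)
    (henv : ∀ S : LieSubalgebra F G, L ≤ S → (∀ x ∈ S, pmap x ∈ S) → S = ⊤)
    (q : ℕ) (hq : q = Module.finrank F G - Module.finrank F L) :
    ∃ (Lc : Fin (q + 1) → LieIdeal F G) (x y : Fin q → G),
      ((Lc 0 : Set G) = (L : Set G)) ∧
      ((Lc (Fin.last q) : Set G) = Set.univ) ∧
      ∀ i : Fin q,
        x i ∉ Lc i.castSucc ∧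
        ((Lc i.succ : Set G) = {g : G | ∃ c : F, ∃ h ∈ Lc i.castSucc, g = c • x i + h}) ∧
        y i ∈ Lc i.castSucc ∧
        pmap (y i) = x i :=
  p_envelope_ideal_chain_general p hp F G pmap hpmap L henv q hq
end
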